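/- arXiv:2310.19423 — 3 statements merged into one kernel-verified Lean document; each statement's English description precedes it below -/
import Mathlib

section
/- Let I ⊆ ℝ be a nonempty open interval and let v : ℝ → ℝ be smooth (C^∞) on I. Then v(t)·v''(t) + 2·(v'(t))² = 0 for all t ∈ I if and only if there exist constants c₁, c₂ ∈ ℝ such that (v(t))³ = c₁·t + c₂ for all t ∈ I. -/
/-- A function with zero derivative at every point of a convex set is constant there. -/
lemma const_of_hasDerivAt_zero {I : Set ℝ} (hIopen : IsOpen I) (hconv : Convex ℝ I)
    {f : ℝ → ℝ} (hf : ∀ x ∈ I, HasDerivAt f 0 x) {x y : ℝ} (hx : x ∈ I) (hy : y ∈ I) :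
    f x = f y := by
  refine hconv.is_const_of_fderivWithin_eq_zero
    (fun z hz => (hf z hz).differentiableAt.differentiableWithinAt) (fun z hz => ?_) hx hy
  rw [fderivWithin_of_isOpen hIopen hz, (hf z hz).hasFDerivAt.fderiv]
  ext1
  simp

/-- For `v` smooth on a nonempty open interval `I`,
`v·v'' + 2(v')² = 0` on `I` iff `v³` is affine on `I`. -/
theorem stmt_0 (I : Set ℝ) (hIopen : IsOpen I) (hIconn : I.OrdConnected)
    (hIne : I.Nonempty) (v : ℝ → ℝ) (hv : ContDiffOn ℝ (⊤ : ℕ∞) v I) :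
    (∀ t ∈ I, v t * deriv (deriv v) t + 2 * (deriv v t) ^ 2 = 0) ↔
      ∃ c₁ c₂ : ℝ, ∀ t ∈ I, (v t) ^ 3 = c₁ * t + c₂ := by
  have hconv : Convex ℝ I := hIconn.convex
  have hdv : ∀ t ∈ I, DifferentiableAt ℝ v t := fun t ht =>
    (hv.contDiffAt (hIopen.mem_nhds ht)).differentiableAt (by simp)
  have hv' : ContDiffOn ℝ (⊤ : ℕ∞) (deriv v) I := hv.deriv_of_isOpen hIopen (by simp)
  have hddv : ∀ t ∈ I, DifferentiableAt ℝ (deriv v) t := fun t ht =>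
    (hv'.contDiffAt (hIopen.mem_nhds ht)).differentiableAt (by simp)
  set h : ℝ → ℝ := fun t => 3 * v t ^ 2 * deriv v t with hh
  have hderiv_h : ∀ t ∈ I, HasDerivAt h
      (3 * v t * (v t * deriv (deriv v) t + 2 * (deriv v t) ^ 2)) t := by
    intro t ht
    have h1 : HasDerivAt (fun s => 3 * v s ^ 2) (3 * (2 * v t * deriv v t)) t := by
      have := ((hdv t ht).hasDerivAt.fun_pow 2).const_mul (3 : ℝ)
      refine this.congr_deriv ?_
      push_cast; ring
    have := h1.fun_mul (hddv t ht).hasDerivAt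
    refine this.congr_deriv ?_
    ring
  have hderiv_g : ∀ t ∈ I, HasDerivAt (fun s => v s ^ 3) (h t) t := by
    intro t ht
    have := (hdv t ht).hasDerivAt.fun_pow 3
    refine this.congr_deriv ?_
    simp only [hh]; norm_num
  constructor
  · intro H
    have hzero : ∀ x ∈ I, HasDerivAt h 0 x := by
      intro x hx
      have := hderiv_h x hx
      rwa [H x hx, mul_zero] at this
    obtain ⟨t₀, ht₀⟩ := hIne
    refine ⟨h t₀, v t₀ ^ 3 - h t₀ * t₀, fun t ht => ?_⟩
    have hG : ∀ x ∈ I, HasDerivAt (fun s => v s ^ 3 - h t₀ * s) 0 x := by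
      intro x hx
      have hcx : h x = h t₀ := const_of_hasDerivAt_zero hIopen hconv hzero hx ht₀
      have := (hderiv_g x hx).fun_sub ((hasDerivAt_id x).const_mul (h t₀))
      simpa [hcx] using this
    have := const_of_hasDerivAt_zero hIopen hconv hG ht ht₀
    linarith
  · rintro ⟨c₁, c₂, hc⟩ t ht
    have hhc : ∀ x ∈ I, h x = c₁ := by
      intro x hx
      have e2 : HasDerivAt (fun s => c₁ * s + c₂) c₁ x := by
        simpa using ((hasDerivAt_id x).const_mul c₁).add_const c₂
      have heq : deriv (fun s => v s ^ 3) x = deriv (fun s => c₁ * s + c₂) x := by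
        apply Filter.EventuallyEq.deriv_eq
        filter_upwards [hIopen.mem_nhds hx] with y hy using hc y hy
      rwa [(hderiv_g x hx).deriv, e2.deriv] at heq
    have hDh : deriv h t = 0 := by
      have hev : h =ᶠ[nhds t] fun _ => c₁ := by
        filter_upwards [hIopen.mem_nhds ht] with y hy using hhc y hy
      rw [hev.deriv_eq]; simp
    have hmain := (hderiv_h t ht).deriv
    rw [hDh] at hmain
    by_cases hvt : v t = 0
    · have hc₁ : c₁ = 0 := by
        have := hhc t ht
        simp [hh, hvt] at this
        linarith
      have hc₂ : c₂ = 0 := by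
        have := hc t ht
        rw [hvt, hc₁] at this
        simpa using this.symm
      have hv0 : ∀ᶠ y in nhds t, v y = 0 := by
        filter_upwards [hIopen.mem_nhds ht] with y hy
        have := hc y hy
        rw [hc₁, hc₂] at this
        have : v y ^ 3 = 0 := by linarith
        exact pow_eq_zero_iff (by norm_num) |>.mp this
      have hdv0 : deriv v t = 0 := by
        have : v =ᶠ[nhds t] fun _ => 0 := hv0
        rw [this.deriv_eq]; simp
      rw [hvt, hdv0]; ring
    · have h3 : (3 : ℝ) * v t ≠ 0 := mul_ne_zero (by norm_num) hvt
      rcases mul_eq_zero.mp hmain.symm with h' | h'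
      · exact absurd h' h3
      · exact h'
end

section
/- Let I ⊆ ℝ be a nonempty open interval, let a, k ∈ ℝ and c₁, c₂ ∈ ℝ with c₁ ≠ 0 and c₁·t + c₂ ≠ 0 for all t ∈ I. Let h : ℝ → ℝ be smooth (C^∞) on I with h'(t) ≠ 0 for all t ∈ I, and suppose h''(t) + ( a·k / cbrt(c₁t + c₂) + c₁ / (3(c₁t + c₂)) ) · h'(t) = 0 for all t ∈ I. Then there exists a constant C ≠ 0 such that h'(t) = C · exp( -(3·a·k / (2·c₁)) · cbrt((c₁t + c₂)²) ) / cbrt(c₁t + c₂) for all t ∈ I. -/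
/-- The real cube root function (the inverse of `x ↦ x³` on `ℝ`). -/
noncomputable def cbrt (x : ℝ) : ℝ := Real.sign x * |x| ^ ((1 : ℝ) / 3)

lemma cbrt_pos (hx : 0 < x) : cbrt x = x ^ ((1:ℝ)/3) := by
  rw [cbrt, Real.sign_of_pos hx, abs_of_pos hx, one_mul]

lemma cbrt_zero : cbrt 0 = 0 := by simp [cbrt]

lemma cbrt_neg (x : ℝ) : cbrt (-x) = - cbrt x := by
  rcases lt_trichotomy x 0 with hx | rfl | hx
  · rw [cbrt, cbrt, Real.sign_of_neg hx, Real.sign_of_pos (by linarith : (0:ℝ) < -x), abs_neg]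
    ring
  · simp [cbrt_zero]
  · rw [cbrt, cbrt, Real.sign_of_pos hx, Real.sign_of_neg (by linarith : -x < 0), abs_neg]
    ring

lemma cbrt_ne_zero (hx : x ≠ 0) : cbrt x ≠ 0 := by
  rcases hx.lt_or_gt with hx | hx
  · rw [show x = -(-x) by ring, cbrt_neg]
    rw [cbrt_pos (by linarith : (0:ℝ) < -x)]
    have : (0:ℝ) < (-x) ^ ((1:ℝ)/3) := Real.rpow_pos_of_pos (by linarith) _
    intro hcon
    rw [neg_eq_zero] at hcon
    linarith
  · rw [cbrt_pos hx]; positivity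

lemma cbrt_cube (x : ℝ) : cbrt x ^ 3 = x := by
  rcases lt_trichotomy x 0 with hx | rfl | hx
  · rw [show x = -(-x) by ring, cbrt_neg, cbrt_pos (by linarith : (0:ℝ) < -x)]
    rw [neg_pow, ← Real.rpow_natCast ((-x) ^ ((1:ℝ)/3)) 3, ← Real.rpow_mul (by linarith)]
    norm_num
  · simp [cbrt_zero]
  · rw [cbrt_pos hx, ← Real.rpow_natCast (x ^ ((1:ℝ)/3)) 3, ← Real.rpow_mul hx.le]
    norm_num

lemma cbrt_sq (x : ℝ) : cbrt (x ^ 2) = cbrt x ^ 2 := by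
  rcases eq_or_ne x 0 with rfl | hx
  · simp [cbrt_zero]
  · have h2 : (0:ℝ) < x ^ 2 := by positivity
    rw [cbrt_pos h2, cbrt, mul_pow, ← Real.rpow_natCast (|x| ^ ((1:ℝ)/3)) 2,
      ← Real.rpow_mul (abs_nonneg x), show x ^ 2 = |x| ^ 2 by rw [sq_abs],
      ← Real.rpow_natCast |x| 2, ← Real.rpow_mul (abs_nonneg x)]
    have : Real.sign x ^ 2 = 1 := by
      rcases hx.lt_or_gt with hx | hx
      · rw [Real.sign_of_neg hx]; norm_num
      · rw [Real.sign_of_pos hx]; norm_num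
    rw [this, one_mul]
    norm_num

lemma hasDerivAt_cbrt (hx : x ≠ 0) : HasDerivAt cbrt (1 / (3 * cbrt x ^ 2)) x := by
  have key : ∀ y : ℝ, 0 < y → HasDerivAt cbrt (1 / (3 * cbrt y ^ 2)) y := by
    intro y hy
    have h1 : HasDerivAt (fun z : ℝ => z ^ ((1:ℝ)/3)) ((1:ℝ)/3 * y ^ ((1:ℝ)/3 - 1)) y :=
      Real.hasDerivAt_rpow_const (Or.inl hy.ne')
    have h2 : (fun z : ℝ => z ^ ((1:ℝ)/3)) =ᶠ[nhds y] cbrt := by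
      filter_upwards [IsOpen.mem_nhds isOpen_Ioi hy] with z hz
      exact (cbrt_pos hz).symm
    have h3 := h1.congr_of_eventuallyEq h2.symm
    refine h3.congr_deriv ?_
    rw [cbrt_pos hy, ← Real.rpow_natCast (y ^ ((1:ℝ)/3)) 2, ← Real.rpow_mul hy.le]
    rw [show (1:ℝ)/3 - 1 = -(1/3*2) by norm_num, Real.rpow_neg hy.le]
    push_cast
    field_simp
  rcases hx.lt_or_gt with hx | hx
  · have h1 := key (-x) (by linarith)
    have h2 : HasDerivAt (fun y : ℝ => -cbrt (-y)) (1 / (3 * cbrt (-x) ^ 2)) x := by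
      have := (h1.comp x (hasDerivAt_neg x)).neg
      exact this.congr_deriv (by ring)
    have h3 : (fun y : ℝ => -cbrt (-y)) = cbrt := by
      funext y; rw [cbrt_neg, neg_neg]
    rw [h3] at h2
    refine h2.congr_deriv ?_
    rw [cbrt_neg, neg_pow]; norm_num
  · exact key x hx
/-- integration of the ODE of Remark 4.1. -/
theorem stmt_3 (I : Set ℝ) (hIopen : IsOpen I) (hIconn : I.OrdConnected)
    (hIne : I.Nonempty) (a k c₁ c₂ : ℝ) (hc₁ : c₁ ≠ 0)
    (hne : ∀ t ∈ I, c₁ * t + c₂ ≠ 0)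
    (h : ℝ → ℝ) (hsm : ContDiffOn ℝ (⊤ : ℕ∞) h I) (hd : ∀ t ∈ I, deriv h t ≠ 0)
    (hode : ∀ t ∈ I,
      deriv (deriv h) t
        + (a * k / cbrt (c₁ * t + c₂) + c₁ / (3 * (c₁ * t + c₂))) * deriv h t = 0) :
    ∃ C : ℝ, C ≠ 0 ∧ ∀ t ∈ I,
      deriv h t =
        C * Real.exp (-(3 * a * k / (2 * c₁)) * cbrt ((c₁ * t + c₂) ^ 2))
          / cbrt (c₁ * t + c₂) := by
  set u : ℝ → ℝ := fun t => c₁ * t + c₂ with hu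
  set φ : ℝ → ℝ := fun t => cbrt (u t) with hφ
  set w : ℝ := 3 * a * k / (2 * c₁) with hw
  set G : ℝ → ℝ := fun t => deriv h t * φ t * Real.exp (w * φ t ^ 2) with hG
  -- φ is nonzero on I
  have hφne : ∀ t ∈ I, φ t ≠ 0 := fun t ht => cbrt_ne_zero (hne t ht)
  -- derivative of φ
  have hφd : ∀ t ∈ I, HasDerivAt φ (c₁ / (3 * φ t ^ 2)) t := by
    intro t ht
    have h1 : HasDerivAt u c₁ t := by
      exact (((hasDerivAt_id t).const_mul c₁).add_const c₂).congr_deriv (mul_one c₁)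
    have h2 := (hasDerivAt_cbrt (hne t ht)).comp t h1
    refine h2.congr_deriv ?_
    field_simp
    rfl
  -- deriv h has derivative deriv (deriv h) at points of I
  have hdh : ∀ t ∈ I, HasDerivAt (deriv h) (deriv (deriv h) t) t := by
    intro t ht
    have h1 : ContDiffOn ℝ (⊤ : ℕ∞) (deriv h) I := hsm.deriv_of_isOpen hIopen (by simp)
    have h2 : DifferentiableOn ℝ (deriv h) I := h1.differentiableOn (by simp)
    have := (h2 t ht).differentiableAt (hIopen.mem_nhds ht)
    exact this.hasDerivAt
  -- G has zero derivative on I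
  have hGd : ∀ t ∈ I, HasDerivAt G 0 t := by
    intro t ht
    have hφt := hφne t ht
    have hut := hne t ht
    have h1 : HasDerivAt (fun s => Real.exp (w * φ s ^ 2))
        (Real.exp (w * φ t ^ 2) * (w * (2 * φ t * (c₁ / (3 * φ t ^ 2))))) t := by
      exact (((hφd t ht).pow 2).const_mul w).exp.congr_deriv (by simp only [Pi.pow_apply]; ring)
    have h2 : HasDerivAt G
        ((deriv (deriv h) t * φ t + deriv h t * (c₁ / (3 * φ t ^ 2)))
            * Real.exp (w * φ t ^ 2)
          + deriv h t * φ t *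
            (Real.exp (w * φ t ^ 2) * (w * (2 * φ t * (c₁ / (3 * φ t ^ 2)))))) t :=
      ((hdh t ht).mul (hφd t ht)).mul h1
    convert h2 using 1
    have hode' := hode t ht
    have hcube : φ t ^ 3 = u t := cbrt_cube (u t)
    have hdd : deriv (deriv h) t
        = -(a * k / φ t + c₁ / (3 * u t)) * deriv h t := by linarith
    rw [hdd, hw]
    have h3 : u t = φ t ^ 3 := hcube.symm
    rw [h3]
    have hexp := Real.exp_ne_zero (w * φ t ^ 2)
    field_simp
    ring
  -- G is constant on I
  have hconv : Convex ℝ I := by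
    rw [convex_iff_ordConnected]; exact hIconn
  obtain ⟨t₀, ht₀⟩ := hIne
  have hGconst : ∀ t ∈ I, G t = G t₀ := by
    intro t ht
    have hdiff : DifferentiableOn ℝ G I := fun s hs =>
      ((hGd s hs).differentiableAt).differentiableWithinAt
    apply hconv.is_const_of_fderivWithin_eq_zero hdiff _ ht ht₀
    intro s hs
    rw [fderivWithin_of_isOpen hIopen hs]
    have := (hGd s hs).hasFDerivAt.fderiv
    rw [this]
    ext
    simp
  refine ⟨G t₀, ?_, ?_⟩
  · exact mul_ne_zero (mul_ne_zero (hd t₀ ht₀) (hφne t₀ ht₀))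
      (Real.exp_ne_zero _)
  · intro t ht
    have h2 : cbrt ((c₁ * t + c₂) ^ 2) = φ t ^ 2 := cbrt_sq _
    rw [h2]
    have hφt := hφne t ht
    have hexp := Real.exp_ne_zero (w * φ t ^ 2)
    rw [show -(3 * a * k / (2 * c₁)) = -w by rw [hw]]
    have h3 : Real.exp (-w * φ t ^ 2) = (Real.exp (w * φ t ^ 2))⁻¹ := by
      rw [← Real.exp_neg]; ring_nf
    rw [h3, ← hGconst t ht, hG]
    simp only
    field_simp
    exact (mul_div_cancel_right₀ _ hφt).symm
end

section
/- Let I ⊆ ℝ be a nonempty open interval, let a ≠ 0, k ≠ 0, c₁ ≠ 0, and c₂, b, A, B ∈ ℝ, with c₁·t + c₂ ≠ 0 for all t ∈ I. Define F : ℝ × ℝ → ℝ by F(t, x) = e^{a·x + b} · ( (A / (a·k)) · exp( -(3·a·k / (2·c₁)) · cbrt((c₁t + c₂)²) ) + B ). Then for all t ∈ I and all x ∈ ℝ: ∂²F/∂t² (t, x) + (k / cbrt(c₁t + c₂)) · ∂²F/∂t∂x (t, x) + (c₁ / (3(c₁t + c₂))) · ∂F/∂t (t, x) = 0. -/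
/-- Partial derivative of `F : ℝ × ℝ → ℝ` in the first (time) variable. -/
noncomputable def pdt (F : ℝ × ℝ → ℝ) (t x : ℝ) : ℝ := deriv (fun s => F (s, x)) t

/-- Partial derivative of `F` in the second (space) variable. -/
noncomputable def pdx (F : ℝ × ℝ → ℝ) (t x : ℝ) : ℝ := deriv (fun y => F (t, y)) x

/-- Second partial derivative `∂²F/∂t²`. -/
noncomputable def pdtt (F : ℝ × ℝ → ℝ) (t x : ℝ) : ℝ := deriv (fun s => pdt F s x) t

/-- Mixed second partial derivative `∂²F/∂t∂x`. -/
noncomputable def pdtx (F : ℝ × ℝ → ℝ) (t x : ℝ) : ℝ := deriv (fun s => pdx F s x) t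

lemma cbrt_of_pos {y : ℝ} (hy : 0 < y) : cbrt y = y ^ ((1 : ℝ) / 3) := by
  rw [cbrt, Real.sign_of_pos hy, abs_of_pos hy, one_mul]

lemma cbrt_sq_s4 {u : ℝ} (hu : u ≠ 0) : cbrt (u ^ 2) = (u ^ 2) ^ ((1 : ℝ) / 3) :=
  cbrt_of_pos (by positivity)

/-- `cbrt u = u / (u²)^{1/3}` for `u ≠ 0`. -/
lemma cbrt_eq_div {u : ℝ} (hu : u ≠ 0) : cbrt u = u / (u ^ 2) ^ ((1 : ℝ) / 3) := by
  have habs : (u ^ 2 : ℝ) = |u| ^ (2 : ℕ) := (sq_abs u).symm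
  have hau : (0 : ℝ) < |u| := abs_pos.mpr hu
  have hp : (u ^ 2 : ℝ) ^ ((1 : ℝ) / 3) = |u| ^ ((2 : ℝ) / 3) := by
    rw [habs, ← Real.rpow_natCast |u| 2, ← Real.rpow_mul (abs_nonneg u)]
    norm_num
  rw [cbrt, hp, eq_div_iff (by positivity), mul_assoc,
    ← Real.rpow_add hau]
  norm_num
  rcases lt_or_gt_of_ne hu with h | h
  · rw [Real.sign_of_neg h, abs_of_neg h]; ring
  · rw [Real.sign_of_pos h, abs_of_pos h]; ring

/-- Derivative of `s ↦ c₁ s + c₂`. -/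
lemma hasDerivAt_aff (c₁ c₂ s : ℝ) : HasDerivAt (fun r : ℝ => c₁ * r + c₂) c₁ s := by
  simpa using ((hasDerivAt_id s).const_mul c₁).add_const c₂

/-- Derivative of `s ↦ (c₁ s + c₂)²`. -/
lemma hasDerivAt_sq (c₁ c₂ s : ℝ) :
    HasDerivAt (fun r : ℝ => (c₁ * r + c₂) ^ 2) (2 * (c₁ * s + c₂) * c₁) s := by
  simpa using (hasDerivAt_aff c₁ c₂ s).fun_pow 2

/-- Derivative of `g : s ↦ ((c₁ s + c₂)²)^{1/3}`. -/
lemma hasDerivAt_g (c₁ c₂ s : ℝ) (hs : c₁ * s + c₂ ≠ 0) :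
    HasDerivAt (fun r : ℝ => ((c₁ * r + c₂) ^ 2) ^ ((1 : ℝ) / 3))
      ((2 * c₁ / 3) * ((c₁ * s + c₂) * ((c₁ * s + c₂) ^ 2) ^ ((1 : ℝ) / 3 - 1))) s := by
  have h := (hasDerivAt_sq c₁ c₂ s).rpow_const (p := (1 : ℝ) / 3)
    (Or.inl (pow_ne_zero 2 hs))
  convert h using 1
  ring

/-- Derivative of `w : s ↦ (c₁ s + c₂) · ((c₁ s + c₂)²)^{1/3 - 1}`. -/
lemma hasDerivAt_w (c₁ c₂ s : ℝ) (hs : c₁ * s + c₂ ≠ 0) :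
    HasDerivAt (fun r : ℝ => (c₁ * r + c₂) * ((c₁ * r + c₂) ^ 2) ^ ((1 : ℝ) / 3 - 1))
      (c₁ * ((c₁ * s + c₂) ^ 2) ^ ((1 : ℝ) / 3 - 1)
        + (c₁ * s + c₂) * (2 * (c₁ * s + c₂) * c₁ * ((1 : ℝ) / 3 - 1)
            * ((c₁ * s + c₂) ^ 2) ^ ((1 : ℝ) / 3 - 1 - 1))) s := by
  have h2 := (hasDerivAt_sq c₁ c₂ s).rpow_const (p := (1 : ℝ) / 3 - 1)
    (Or.inl (pow_ne_zero 2 hs))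
  have h := (hasDerivAt_aff c₁ c₂ s).fun_mul h2
  convert h using 1

set_option maxHeartbeats 1000000 in
/-- the explicit family of Remark 4.1 (case `k ≠ 0`) solves the
PDE of Proposition 4.1(ii). -/
theorem stmt_4 (I : Set ℝ) (hIopen : IsOpen I) (hIconn : I.OrdConnected)
    (hIne : I.Nonempty) (a k c₁ c₂ b A B : ℝ) (ha : a ≠ 0) (hk : k ≠ 0)
    (hc₁ : c₁ ≠ 0) (hne : ∀ t ∈ I, c₁ * t + c₂ ≠ 0)
    (F : ℝ × ℝ → ℝ)
    (hF : ∀ t x : ℝ, F (t, x) =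
      Real.exp (a * x + b) *
        ((A / (a * k)) * Real.exp (-(3 * a * k / (2 * c₁)) * cbrt ((c₁ * t + c₂) ^ 2)) + B)) :
    ∀ t ∈ I, ∀ x : ℝ,
      pdtt F t x + (k / cbrt (c₁ * t + c₂)) * pdtx F t x
        + (c₁ / (3 * (c₁ * t + c₂))) * pdt F t x = 0 := by
  intro t ht x
  have hu : c₁ * t + c₂ ≠ 0 := hne t ht
  set L : ℝ := -(3 * a * k / (2 * c₁)) with hL
  set C : ℝ := A / (a * k) with hC
  set E : ℝ := Real.exp (a * x + b) with hE
  -- the smooth representative of t ↦ F(t,x)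
  set G : ℝ → ℝ := fun s =>
    E * (C * Real.exp (L * ((c₁ * s + c₂) ^ 2) ^ ((1 : ℝ) / 3)) + B) with hG
  -- its derivative
  set G1 : ℝ → ℝ := fun s =>
    E * C * L * (2 * c₁ / 3) *
      (Real.exp (L * ((c₁ * s + c₂) ^ 2) ^ ((1 : ℝ) / 3)) *
        ((c₁ * s + c₂) * ((c₁ * s + c₂) ^ 2) ^ ((1 : ℝ) / 3 - 1))) with hG1
  -- F(·,x) agrees with G wherever c₁s+c₂ ≠ 0
  have hFG : ∀ s : ℝ, c₁ * s + c₂ ≠ 0 → F (s, x) = G s := by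
    intro s hs
    rw [hF, hG, cbrt_sq_s4 hs]
  have hvcont : Continuous (fun s : ℝ => c₁ * s + c₂) := by continuity
  have hvev : ∀ s : ℝ, c₁ * s + c₂ ≠ 0 → ∀ᶠ r in nhds s, c₁ * r + c₂ ≠ 0 :=
    fun s hs => hvcont.continuousAt.eventually_ne hs
  have hFGev : ∀ s : ℝ, c₁ * s + c₂ ≠ 0 →
      (fun r => F (r, x)) =ᶠ[nhds s] G :=
    fun s hs => (hvev s hs).mono fun r hr => hFG r hr
  -- HasDerivAt for G
  have hGd : ∀ s : ℝ, c₁ * s + c₂ ≠ 0 → HasDerivAt G (G1 s) s := by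
    intro s hs
    have hexp := (((hasDerivAt_g c₁ c₂ s hs).const_mul L).exp.const_mul C).add_const B
    have : HasDerivAt G _ s := hexp.const_mul E
    convert this using 1
    simp only [hG1]
    ring
  -- HasDerivAt for F(·,x)
  have hFd : ∀ s : ℝ, c₁ * s + c₂ ≠ 0 → HasDerivAt (fun r => F (r, x)) (G1 s) s :=
    fun s hs => (hGd s hs).congr_of_eventuallyEq (hFGev s hs)
  have hpdt : ∀ s : ℝ, c₁ * s + c₂ ≠ 0 → pdt F s x = G1 s :=
    fun s hs => (hFd s hs).deriv
  -- pdx F s x = a * F (s, x)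
  have hpdx : ∀ s : ℝ, pdx F s x = a * F (s, x) := by
    intro s
    have hx : HasDerivAt (fun y => F (s, y))
        (Real.exp (a * x + b) * a *
          (C * Real.exp (L * cbrt ((c₁ * s + c₂) ^ 2)) + B)) x := by
      have hexp : HasDerivAt (fun y : ℝ => Real.exp (a * y + b))
          (Real.exp (a * x + b) * a) x := (hasDerivAt_aff a b x).exp
      have := hexp.mul_const (C * Real.exp (L * cbrt ((c₁ * s + c₂) ^ 2)) + B)
      refine this.congr_of_eventuallyEq ?_
      filter_upwards with y
      rw [hF]
    rw [pdx, hx.deriv, hF]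
    ring
  -- pdtx F t x = a * G1 t
  have hpdtx : pdtx F t x = a * G1 t := by
    have heq : (fun s => pdx F s x) = fun s => a * F (s, x) := funext hpdx
    rw [pdtx, heq, ((hFd t hu).const_mul a).deriv]
  -- pdtt
  set u : ℝ := c₁ * t + c₂ with hudef
  set w : ℝ := u * (u ^ 2) ^ ((1 : ℝ) / 3 - 1) with hw
  set dw : ℝ := c₁ * (u ^ 2) ^ ((1 : ℝ) / 3 - 1)
      + u * (2 * u * c₁ * ((1 : ℝ) / 3 - 1) * (u ^ 2) ^ ((1 : ℝ) / 3 - 1 - 1)) with hdw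
  set Ex : ℝ := Real.exp (L * (u ^ 2) ^ ((1 : ℝ) / 3)) with hEx
  have hG1d : HasDerivAt G1
      (E * C * L * (2 * c₁ / 3) * ((Ex * (L * ((2 * c₁ / 3) * w))) * w + Ex * dw)) t := by
    have hexp : HasDerivAt
        (fun s => Real.exp (L * ((c₁ * s + c₂) ^ 2) ^ ((1 : ℝ) / 3)))
        (Ex * (L * ((2 * c₁ / 3) * w))) t := by
      have := ((hasDerivAt_g c₁ c₂ t hu).const_mul L).exp
      convert this using 2
    have hwd : HasDerivAt
        (fun s => (c₁ * s + c₂) * ((c₁ * s + c₂) ^ 2) ^ ((1 : ℝ) / 3 - 1)) dw t := by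
      have := hasDerivAt_w c₁ c₂ t hu
      convert this using 1
    exact (hexp.mul hwd).const_mul _
  have hpdtt : pdtt F t x
      = E * C * L * (2 * c₁ / 3) * ((Ex * (L * ((2 * c₁ / 3) * w))) * w + Ex * dw) := by
    have hev : (fun s => pdt F s x) =ᶠ[nhds t] G1 :=
      (hvev t hu).mono fun s hs => hpdt s hs
    rw [pdtt, hev.deriv_eq, hG1d.deriv]
  -- collect everything and finish by algebra
  rw [hpdtt, hpdtx, hpdt t hu]
  have hG1t : G1 t = E * C * L * (2 * c₁ / 3) * (Ex * w) := by
    simp only [hG1]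
    rfl
  rw [hG1t]
  -- algebraic identity
  have hu2 : (0 : ℝ) < u ^ 2 := by positivity
  set p : ℝ := (u ^ 2) ^ ((1 : ℝ) / 3) with hp
  have hppos : 0 < p := Real.rpow_pos_of_pos hu2 _
  have hP2 : (u ^ 2) ^ ((1 : ℝ) / 3 - 1) = p / u ^ 2 := by
    rw [hp, Real.rpow_sub hu2, Real.rpow_one]
  have hP5 : (u ^ 2) ^ ((1 : ℝ) / 3 - 1 - 1) = p / u ^ 2 / u ^ 2 := by
    rw [hp, Real.rpow_sub hu2, Real.rpow_sub hu2, Real.rpow_one]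
  have hcb : cbrt u = u / p := cbrt_eq_div hu
  rw [hcb] at *
  rw [hw, hdw, hP2, hP5, hL]
  field_simp
  ring
end
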